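/- Let μ be a centered probability measure on ℝ that is absolutely continuous with respect to Lebesgue measure. Then for every p ≥ 1, ∫_{I_μ} (Λ*_μ(x))^p dμ(x) < ∞. -/

import Mathlib

open MeasureTheory Real
open scoped ENNReal

/-!
Chernoff's bound, used with `t ≥ 0` and with `t ≤ 0`, gives
`Λ*(x) ≤ -log min (μ [x, ∞)) (μ (-∞, x])` at every point. For any finite measure on `ℝ`,
`μ {x | μ [x, ∞) ≤ s} ≤ s`: by inner regularity it suffices to test compact subsets of this upper
set, and such a set lies in `[a, ∞)` for its least element `a`. Hence `μ {Λ* > n} ≤ 2 e⁻ⁿ`, and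
`∫ (Λ*)^p dμ ≤ ∑ (n + 1)^p μ {Λ* > n} < ∞`.
-/

/-- Logarithmic Laplace transform of a measure on `ℝ`. -/
noncomputable def logLaplace1 (μ : Measure ℝ) (t : ℝ) : EReal :=
  ENNReal.log (∫⁻ z, ENNReal.ofReal (Real.exp (t * z)) ∂μ)

/-- Cramér transform of a measure on `ℝ`. -/
noncomputable def cramer1 (μ : Measure ℝ) (x : ℝ) : EReal :=
  ⨆ t : ℝ, ((t * x : ℝ) : EReal) - logLaplace1 μ t

/-- The open interval `I_μ = (−α₋, α₊)` spanned by the support of `μ`. -/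
def Isupp (μ : Measure ℝ) : Set ℝ :=
  {x | 0 < μ (Set.Ici x)} ∩ {x | 0 < μ (Set.Iic x)}

theorem exp_mul_measure_le_lintegral_exp (μ : Measure ℝ) (t x : ℝ) :
    ENNReal.ofReal (exp (t * x)) * μ {z | t * x ≤ t * z} ≤
      ∫⁻ z, ENNReal.ofReal (exp (t * z)) ∂μ :=
  calc ENNReal.ofReal (exp (t * x)) * μ {z | t * x ≤ t * z}
      ≤ ENNReal.ofReal (exp (t * x)) *
          μ {z | ENNReal.ofReal (exp (t * x)) ≤ ENNReal.ofReal (exp (t * z))} := by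
        gcongr
        exact fun hz => ENNReal.ofReal_le_ofReal (exp_le_exp.2 hz)
    _ ≤ ∫⁻ z, ENNReal.ofReal (exp (t * z)) ∂μ := mul_meas_ge_le_lintegral₀ (by fun_prop) _

theorem ENNReal.coe_sub_log_le_neg_log {s : ℝ} {m L : ℝ≥0∞} (h : ENNReal.ofReal (exp s) * m ≤ L) :
    (s : EReal) - ENNReal.log L ≤ -ENNReal.log m := by
  rcases eq_or_ne m 0 with rfl | hm0
  · simp
  rcases eq_or_ne m ⊤ with rfl | hmtop
  · have hL : L = ⊤ := top_le_iff.1 (by simpa [ENNReal.mul_top, exp_pos s] using h)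
    simp [hL]
  have h' : (s : EReal) + ENNReal.log m ≤ ENNReal.log L := by
    simpa [ENNReal.log_mul_add, ENNReal.log_ofReal_of_pos (exp_pos s)] using ENNReal.log_monotone h
  apply EReal.sub_le_of_le_add'
  rwa [← sub_eq_add_neg, EReal.le_sub_iff_add_le (.inl (by simpa using hm0))
    (.inl (by simpa using hmtop))]

theorem cramer1_le_neg_log_min (μ : Measure ℝ) (x : ℝ) :
    cramer1 μ x ≤ -ENNReal.log (min (μ (Set.Ici x)) (μ (Set.Iic x))) := by
  refine iSup_le fun t => ENNReal.coe_sub_log_le_neg_log ?_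
  refine le_trans ?_ (exp_mul_measure_le_lintegral_exp μ t x)
  gcongr
  rcases le_total 0 t with ht | ht
  · exact min_le_left _ _ |>.trans (measure_mono fun z hz => mul_le_mul_of_nonneg_left hz ht)
  · exact min_le_right _ _ |>.trans (measure_mono fun z hz => mul_le_mul_of_nonpos_left hz ht)

theorem cramer1_nonneg (μ : Measure ℝ) [IsProbabilityMeasure μ] (x : ℝ) : 0 ≤ cramer1 μ x :=
  le_iSup_of_le 0 (by simp [logLaplace1])

theorem EReal.abs_eq_toENNReal {a : EReal} (h0 : 0 ≤ a) : a.abs = a.toENNReal := by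
  induction a using EReal.rec with
  | bot => simp at h0
  | coe r => simp [EReal.abs_def, abs_of_nonneg (EReal.coe_nonneg.1 h0)]
  | top => simp

theorem min_measure_lt_of_natCast_lt_abs_cramer1 (μ : Measure ℝ) [IsProbabilityMeasure μ]
    {n : ℕ} {x : ℝ} (h : (n : ℝ≥0∞) < (cramer1 μ x).abs) :
    min (μ (Set.Ici x)) (μ (Set.Iic x)) < ENNReal.ofReal (exp (-n)) := by
  contrapose! h
  have hle : cramer1 μ x ≤ ((n : ℝ≥0∞) : EReal) :=
    calc cramer1 μ x ≤ -ENNReal.log (min (μ (Set.Ici x)) (μ (Set.Iic x))) :=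
          cramer1_le_neg_log_min μ x
      _ ≤ -ENNReal.log (ENNReal.ofReal (exp (-n))) :=
          EReal.neg_le_neg_iff.2 (ENNReal.log_monotone h)
      _ = ((n : ℝ≥0∞) : EReal) := by
          rw [ENNReal.log_ofReal_of_pos (exp_pos _), log_exp, EReal.coe_neg, neg_neg]; rfl
  rw [EReal.abs_eq_toENNReal (cramer1_nonneg μ x)]
  simpa using EReal.toENNReal_le_toENNReal hle

theorem measure_setOf_measure_Ici_le (μ : Measure ℝ) [IsFiniteMeasure μ] (s : ℝ≥0∞) :
    μ {x | μ (Set.Ici x) ≤ s} ≤ s := by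
  have hupper : IsUpperSet {x | μ (Set.Ici x) ≤ s} := fun a b hab ha =>
    (measure_mono (Set.Ici_subset_Ici.2 hab)).trans ha
  rw [hupper.ordConnected.measurableSet.measure_eq_iSup_isCompact]
  refine iSup₂_le fun K hKS => iSup_le fun hK => ?_
  rcases K.eq_empty_or_nonempty with rfl | hne
  · simp
  obtain ⟨a, haK, ha⟩ := hK.exists_isLeast hne
  exact (measure_mono fun x hx => ha hx).trans (hKS haK)

theorem measure_setOf_measure_Iic_le (μ : Measure ℝ) [IsFiniteMeasure μ] (s : ℝ≥0∞) :
    μ {x | μ (Set.Iic x) ≤ s} ≤ s := by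
  have hlower : IsLowerSet {x | μ (Set.Iic x) ≤ s} := fun a b hab ha =>
    (measure_mono (Set.Iic_subset_Iic.2 hab)).trans ha
  rw [hlower.ordConnected.measurableSet.measure_eq_iSup_isCompact]
  refine iSup₂_le fun K hKS => iSup_le fun hK => ?_
  rcases K.eq_empty_or_nonempty with rfl | hne
  · simp
  obtain ⟨a, haK, ha⟩ := hK.exists_isGreatest hne
  exact (measure_mono fun x hx => ha hx).trans (hKS haK)

theorem measure_setOf_min_measure_Ici_Iic_lt_le (μ : Measure ℝ) [IsFiniteMeasure μ] (s : ℝ≥0∞) :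
    μ {x | min (μ (Set.Ici x)) (μ (Set.Iic x)) < s} ≤ 2 * s :=
  calc μ {x | min (μ (Set.Ici x)) (μ (Set.Iic x)) < s}
      ≤ μ ({x | μ (Set.Ici x) ≤ s} ∪ {x | μ (Set.Iic x) ≤ s}) :=
        measure_mono fun _ hx => Or.imp le_of_lt le_of_lt (min_lt_iff.1 (Set.mem_ofPred.1 hx))
    _ ≤ s + s := (measure_union_le _ _).trans
        (add_le_add (measure_setOf_measure_Ici_le μ s) (measure_setOf_measure_Iic_le μ s))
    _ = 2 * s := (two_mul s).symm

theorem ENNReal.exists_natCast_lt_le_add_one {a : ℝ≥0∞} (h0 : a ≠ 0) (htop : a ≠ ⊤) :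
    ∃ n : ℕ, (n : ℝ≥0∞) < a ∧ a ≤ n + 1 := by
  lift a to NNReal using htop
  obtain ⟨n, hn⟩ := Nat.exists_eq_add_one_of_ne_zero
    (Nat.ceil_pos.2 (pos_iff_ne_zero.2 (by simpa using h0))).ne'
  have hlt : ((n + 1 : ℕ) : NNReal) < a + 1 := hn ▸ Nat.ceil_lt_add_one a.2
  have hle : a ≤ ((n + 1 : ℕ) : NNReal) := hn ▸ Nat.le_ceil a
  push_cast at hlt hle
  exact ⟨n, by exact_mod_cast (add_lt_add_iff_right 1).1 hlt, by exact_mod_cast hle⟩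

theorem ENNReal.rpow_le_tsum_ite_natCast_lt (a : ℝ≥0∞) {p : ℝ} (hp : 0 < p) :
    a ^ p ≤ ∑' n : ℕ, if (n : ℝ≥0∞) < a then ((n : ℝ≥0∞) + 1) ^ p else 0 := by
  rcases eq_or_ne a ⊤ with rfl | htop
  · simp only [ENNReal.natCast_lt_top, if_true, ENNReal.top_rpow_of_pos hp]
    calc ⊤ = ∑' _ : ℕ, (1 : ℝ≥0∞) := (ENNReal.tsum_const_eq_top_of_ne_zero one_ne_zero).symm
      _ ≤ _ := ENNReal.tsum_le_tsum fun n => ENNReal.one_le_rpow le_add_self hp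
  rcases eq_or_ne a 0 with rfl | h0
  · simp [ENNReal.zero_rpow_of_pos hp]
  obtain ⟨n, hna, han⟩ := ENNReal.exists_natCast_lt_le_add_one h0 htop
  calc a ^ p ≤ ((n : ℝ≥0∞) + 1) ^ p := ENNReal.rpow_le_rpow han hp.le
    _ = if (n : ℝ≥0∞) < a then ((n : ℝ≥0∞) + 1) ^ p else 0 := (if_pos hna).symm
    _ ≤ _ := ENNReal.le_tsum n

theorem lintegral_rpow_le_tsum_mul_measure {α : Type*} [MeasurableSpace α] (μ : Measure α)
    {f : α → ℝ≥0∞} {p : ℝ} (hp : 0 < p) {B : ℕ → Set α} (hB : ∀ n, MeasurableSet (B n))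
    (hfB : ∀ n : ℕ, {x | (n : ℝ≥0∞) < f x} ⊆ B n) :
    ∫⁻ x, f x ^ p ∂μ ≤ ∑' n : ℕ, ((n : ℝ≥0∞) + 1) ^ p * μ (B n) := by
  calc ∫⁻ x, f x ^ p ∂μ
      ≤ ∫⁻ x, ∑' n : ℕ, (B n).indicator (fun _ => ((n : ℝ≥0∞) + 1) ^ p) x ∂μ := by
        refine lintegral_mono fun x => (ENNReal.rpow_le_tsum_ite_natCast_lt (f x) hp).trans ?_
        refine ENNReal.tsum_le_tsum fun n => ?_
        split_ifs with hn
        · rw [Set.indicator_of_mem (hfB n hn)]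
        · exact zero_le
    _ = ∑' n : ℕ, ((n : ℝ≥0∞) + 1) ^ p * μ (B n) := by
        rw [lintegral_tsum fun n => (measurable_const.indicator (hB n)).aemeasurable]
        simp only [lintegral_indicator_const (hB _)]

theorem Real.summable_add_one_rpow_mul_exp_neg_nat (p : ℝ) :
    Summable fun n : ℕ => ((n : ℝ) + 1) ^ p * exp (-n) := by
  have hk := (summable_nat_add_iff 1).2 (summable_pow_mul_exp_neg_nat_mul ⌈p⌉₊ one_pos)
  refine (hk.mul_left (exp 1)).of_nonneg_of_le (fun n => by positivity) fun n => ?_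
  have hexp : exp (-(n : ℝ)) = exp 1 * exp (-1 * ((n + 1 : ℕ) : ℝ)) := by
    rw [← exp_add]; push_cast; ring_nf
  have hpow : ((n : ℝ) + 1) ^ p ≤ ((n : ℝ) + 1) ^ ⌈p⌉₊ := by
    rw [← rpow_natCast]
    exact rpow_le_rpow_of_exponent_le (by linarith [n.cast_nonneg (α := ℝ)]) (Nat.le_ceil p)
  rw [hexp]
  push_cast
  calc ((n : ℝ) + 1) ^ p * (exp 1 * exp (-1 * ((n : ℝ) + 1)))
      ≤ ((n : ℝ) + 1) ^ ⌈p⌉₊ * (exp 1 * exp (-1 * ((n : ℝ) + 1))) := by gcongr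
    _ = _ := by ring

theorem ENNReal.tsum_add_one_rpow_mul_exp_neg_lt_top {p : ℝ} (hp : 0 ≤ p) {C : ℝ≥0∞}
    (hC : C ≠ ⊤) : ∑' n : ℕ, ((n : ℝ≥0∞) + 1) ^ p * (C * ENNReal.ofReal (exp (-n))) < ⊤ := by
  have hterm : ∀ n : ℕ, ((n : ℝ≥0∞) + 1) ^ p * (C * ENNReal.ofReal (exp (-n))) =
      C * ENNReal.ofReal (((n : ℝ) + 1) ^ p * exp (-n)) := by
    intro n
    rw [ENNReal.ofReal_mul (by positivity), ← ENNReal.ofReal_rpow_of_nonneg (by positivity) hp,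
      ENNReal.ofReal_add (by positivity) zero_le_one, ENNReal.ofReal_natCast, ENNReal.ofReal_one]
    ring
  simp_rw [hterm, ENNReal.tsum_mul_left, ← ENNReal.ofReal_tsum_of_nonneg (fun n => by positivity)
    (Real.summable_add_one_rpow_mul_exp_neg_nat p)]
  exact ENNReal.mul_lt_top hC.lt_top ENNReal.ofReal_lt_top

theorem stmt5_general (μ : Measure ℝ) [IsProbabilityMeasure μ] (p : ℝ) (hp : 1 ≤ p) :
    ∫⁻ x in Isupp μ, (cramer1 μ x).abs ^ p ∂μ < ⊤ := by
  set B : ℕ → Set ℝ := fun n =>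
    {x | min (μ (Set.Ici x)) (μ (Set.Iic x)) < ENNReal.ofReal (exp (-n))}
  have hB : ∀ n, MeasurableSet (B n) := fun n =>
    measurableSet_lt ((Antitone.measurable fun _ _ h => measure_mono (Set.Ici_subset_Ici.2 h)).min
      (Monotone.measurable fun _ _ h => measure_mono (Set.Iic_subset_Iic.2 h))) measurable_const
  calc ∫⁻ x in Isupp μ, (cramer1 μ x).abs ^ p ∂μ
      ≤ ∫⁻ x, (cramer1 μ x).abs ^ p ∂μ := setLIntegral_le_lintegral _ _
    _ ≤ ∑' n : ℕ, ((n : ℝ≥0∞) + 1) ^ p * μ (B n) :=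
        lintegral_rpow_le_tsum_mul_measure μ (by linarith) hB
          fun _ _ hx => min_measure_lt_of_natCast_lt_abs_cramer1 μ hx
    _ ≤ ∑' n : ℕ, ((n : ℝ≥0∞) + 1) ^ p * (2 * ENNReal.ofReal (exp (-n))) :=
        ENNReal.tsum_le_tsum fun n => by
          gcongr
          exact measure_setOf_min_measure_Ici_Iic_lt_le μ _
    _ < ⊤ := ENNReal.tsum_add_one_rpow_mul_exp_neg_lt_top (by linarith) ENNReal.ofNat_ne_top

/-- For a centered absolutely continuous probability measure on `ℝ`, the Cramér transform
has finite moments of all orders `p ≥ 1` on `I_μ`. -/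
theorem stmt5 (μ : Measure ℝ) [IsProbabilityMeasure μ] (hac : μ ≪ volume)
    (hint : Integrable (fun x : ℝ => x) μ) (hcent : ∫ x, x ∂μ = 0) (p : ℝ) (hp : 1 ≤ p) :
    ∫⁻ x in Isupp μ, (cramer1 μ x).abs ^ p ∂μ < ⊤ :=
  stmt5_general μ p hp
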